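/- Let k be a field of characteristic ≠ 2,3. The 3-dimensional span W₁ of {E₁₁, E₂₂, E₃₃} in the space of symmetric 3×3 matrices contains a nonzero matrix of rank 1, whereas the span W₂ of {E₂₂ − E₃₃, E₁₁ − E₃₃, 2E₁₁ + (E₁₂+E₂₁) + (E₁₃+E₃₁) + (E₂₃+E₃₂)} contains no nonzero matrix of rank 1. Consequently there is no M ∈ GL(3,k) with MᵀW₁M = W₂. -/

import Mathlib

open Matrix

noncomputable section

/-- The 3×3 matrix unit over a field `k`. -/
def E (k : Type*) [Field k] (i j : Fin 3) : Matrix (Fin 3) (Fin 3) k :=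
  Matrix.single i j (1 : k)

section Aux

variable {k : Type*} [Field k]

lemma rankOne_decomp (A : Matrix (Fin 3) (Fin 3) k) (h : A.rank = 1) :
    ∃ v w : Fin 3 → k, (∀ i j, A i j = v i * w j) ∧ v ≠ 0 ∧ w ≠ 0 := by
  rw [Matrix.rank] at h
  obtain ⟨u, hu0, hspan⟩ := finrank_eq_one_iff'.mp h
  choose c hc using fun j : Fin 3 =>
    hspan ⟨A *ᵥ Pi.single j 1, ⟨Pi.single j 1, rfl⟩⟩
  refine ⟨(u : Fin 3 → k), c, ?_, ?_, ?_⟩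
  · intro i j
    have := congrFun (congrArg (Subtype.val) (hc j)) i
    simp only [Submodule.coe_smul, Pi.smul_apply, smul_eq_mul, mulVec_single, op_smul_eq_mul, Matrix.col_apply, mul_one] at this
    rw [← this]; ring
  · exact fun hu => hu0 (Subtype.ext hu)
  · intro hc0
    have hA : A = 0 := by
      ext i j
      have := congrFun (congrArg (Subtype.val) (hc j)) i
      simp only [Submodule.coe_smul, Pi.smul_apply, smul_eq_mul, mulVec_single, op_smul_eq_mul, Matrix.col_apply, mul_one] at this
      rw [← this]
      simp [congrFun hc0 j]
    have h' : A.rank = 1 := by rw [Matrix.rank]; exact h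
    rw [hA, Matrix.rank_zero] at h'
    exact one_ne_zero h'.symm

lemma noRankOne : ∀ A ∈ Submodule.span k
      {E k 1 1 - E k 2 2, E k 0 0 - E k 2 2,
        (2 : k) • E k 0 0 + (E k 0 1 + E k 1 0) + (E k 0 2 + E k 2 0)
          + (E k 1 2 + E k 2 1)},
    A ≠ 0 → A.rank ≠ 1 := by
  intro A hA hA0 hr
  rw [Submodule.mem_span_insert] at hA
  obtain ⟨a, z, hz, rfl⟩ := hA
  rw [Submodule.mem_span_insert] at hz
  obtain ⟨b, z', hz', rfl⟩ := hz
  rw [Submodule.mem_span_singleton] at hz'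
  obtain ⟨c, rfl⟩ := hz'
  obtain ⟨v, w, hvw, hv, hw⟩ := rankOne_decomp _ hr
  have e00 : v 0 * w 0 = b + 2*c := by
    have h := hvw 0 0; simp [E, Matrix.single] at h; linear_combination -h
  have e11 : v 1 * w 1 = a := by
    have h := hvw 1 1; simp [E, Matrix.single] at h; linear_combination -h
  have e22 : v 2 * w 2 = -a - b := by
    have h := hvw 2 2; simp [E, Matrix.single] at h; linear_combination -h
  have e01 : v 0 * w 1 = c := by
    have h := hvw 0 1; simp [E, Matrix.single] at h; linear_combination -h
  have e02 : v 0 * w 2 = c := by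
    have h := hvw 0 2; simp [E, Matrix.single] at h; linear_combination -h
  have e10 : v 1 * w 0 = c := by
    have h := hvw 1 0; simp [E, Matrix.single] at h; linear_combination -h
  have e12 : v 1 * w 2 = c := by
    have h := hvw 1 2; simp [E, Matrix.single] at h; linear_combination -h
  have e20 : v 2 * w 0 = c := by
    have h := hvw 2 0; simp [E, Matrix.single] at h; linear_combination -h
  have e21 : v 2 * w 1 = c := by
    have h := hvw 2 1; simp [E, Matrix.single] at h; linear_combination -h
  have T : v 0 * w 0 + v 1 * w 1 + v 2 * w 2 = 2*c := by
    rw [e00, e11, e22]; ring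
  by_cases hc : c = 0
  · subst hc
    have hvor : v 0 ≠ 0 ∨ v 1 ≠ 0 ∨ v 2 ≠ 0 := by
      by_contra hco; push_neg at hco
      exact hv (funext fun j => by fin_cases j <;> simp [hco.1, hco.2.1, hco.2.2])
    rcases hvor with hi | hi | hi
    · have hw1 : w 1 = 0 := by rcases mul_eq_zero.mp e01 with h|h; exact absurd h hi; exact h
      have hw2 : w 2 = 0 := by rcases mul_eq_zero.mp e02 with h|h; exact absurd h hi; exact h
      have hw0 : w 0 ≠ 0 := by
        intro h0; exact hw (funext fun j => by fin_cases j <;> simp [h0, hw1, hw2])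
      have hv1 : v 1 = 0 := by rcases mul_eq_zero.mp e10 with h|h; exact h; exact absurd h hw0
      have hv2 : v 2 = 0 := by rcases mul_eq_zero.mp e20 with h|h; exact h; exact absurd h hw0
      exact mul_ne_zero hi hw0 (by linear_combination T - hv1 * w 1 - hv2 * w 2)
    · have hw0 : w 0 = 0 := by rcases mul_eq_zero.mp e10 with h|h; exact absurd h hi; exact h
      have hw2 : w 2 = 0 := by rcases mul_eq_zero.mp e12 with h|h; exact absurd h hi; exact h
      have hw1 : w 1 ≠ 0 := by
        intro h0; exact hw (funext fun j => by fin_cases j <;> simp [h0, hw0, hw2])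
      have hv0 : v 0 = 0 := by rcases mul_eq_zero.mp e01 with h|h; exact h; exact absurd h hw1
      have hv2 : v 2 = 0 := by rcases mul_eq_zero.mp e21 with h|h; exact h; exact absurd h hw1
      exact mul_ne_zero hi hw1 (by linear_combination T - hv0 * w 0 - hv2 * w 2)
    · have hw0 : w 0 = 0 := by rcases mul_eq_zero.mp e20 with h|h; exact absurd h hi; exact h
      have hw1 : w 1 = 0 := by rcases mul_eq_zero.mp e21 with h|h; exact absurd h hi; exact h
      have hw2 : w 2 ≠ 0 := by
        intro h0; exact hw (funext fun j => by fin_cases j <;> simp [h0, hw0, hw1])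
      have hv0 : v 0 = 0 := by rcases mul_eq_zero.mp e02 with h|h; exact h; exact absurd h hw2
      have hv1 : v 1 = 0 := by rcases mul_eq_zero.mp e12 with h|h; exact h; exact absurd h hw2
      exact mul_ne_zero hi hw2 (by linear_combination T - hv0 * w 0 - hv1 * w 1)
  · have hv0 : v 0 ≠ 0 := fun h => hc (by rw [← e01, h, zero_mul])
    have hv1 : v 1 ≠ 0 := fun h => hc (by rw [← e10, h, zero_mul])
    have hw12 : w 1 = w 2 := mul_left_cancel₀ hv0 (e01.trans e02.symm)
    have hw02 : w 0 = w 2 := mul_left_cancel₀ hv1 (e10.trans e12.symm)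
    have d00 : v 0 * w 0 = c := by rw [hw02]; exact e02
    have d11 : v 1 * w 1 = c := by rw [hw12]; exact e12
    have d22 : v 2 * w 2 = c := by rw [← hw12]; exact e21
    exact hc (by linear_combination T - d00 - d11 - d22)

lemma rankE00 : (E k 0 0).rank = 1 := by
  classical
  have hE : E k 0 0 = diagonal (Pi.single (0 : Fin 3) (1 : k)) := by
    ext i j
    fin_cases i <;> fin_cases j <;> simp [E, Matrix.single, diagonal, Pi.single_apply]
  rw [hE, Matrix.rank_diagonal]
  rw [Fintype.card_eq_one_iff]
  refine ⟨⟨0, by simp⟩, ?_⟩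
  rintro ⟨i, hi⟩
  apply Subtype.ext
  show i = 0
  by_contra hne
  exact hi (Pi.single_eq_of_ne hne 1)

lemma E00ne : (E k 0 0) ≠ 0 := by
  intro h
  have := congrFun (congrFun h 0) 0
  simp [E, Matrix.single] at this

end Aux

/-- W₁ = span{E₁₁,E₂₂,E₃₃} contains a nonzero rank-one matrix,
W₂ = span{E₂₂−E₃₃, E₁₁−E₃₃, 2E₁₁+(E₁₂+E₂₁)+(E₁₃+E₃₁)+(E₂₃+E₃₂)} contains none,
hence no M ∈ GL(3,k) satisfies MᵀW₁M = W₂. -/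
theorem stmt8 (k : Type*) [Field k] (h2 : (2 : k) ≠ 0) (h3 : (3 : k) ≠ 0) :
    (∃ A ∈ Submodule.span k {E k 0 0, E k 1 1, E k 2 2}, A ≠ 0 ∧ A.rank = 1)
    ∧ (∀ A ∈ Submodule.span k
          {E k 1 1 - E k 2 2, E k 0 0 - E k 2 2,
            (2 : k) • E k 0 0 + (E k 0 1 + E k 1 0) + (E k 0 2 + E k 2 0)
              + (E k 1 2 + E k 2 1)},
        A ≠ 0 → A.rank ≠ 1)
    ∧ ¬∃ M : Matrix (Fin 3) (Fin 3) k, IsUnit M ∧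
        (fun A => Mᵀ * A * M) ''
            ((Submodule.span k {E k 0 0, E k 1 1, E k 2 2} : Submodule k _) : Set _)
          = ((Submodule.span k
              {E k 1 1 - E k 2 2, E k 0 0 - E k 2 2,
                (2 : k) • E k 0 0 + (E k 0 1 + E k 1 0) + (E k 0 2 + E k 2 0)
                  + (E k 1 2 + E k 2 1)} : Submodule k _) : Set _) := by
  refine ⟨⟨E k 0 0, Submodule.subset_span (Set.mem_insert _ _), E00ne, rankE00⟩,
    noRankOne, ?_⟩
  rintro ⟨M, hM, hMW⟩
  have hdet : IsUnit M.det := (Matrix.isUnit_iff_isUnit_det M).mp hM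
  have hdetT : IsUnit Mᵀ.det := by rwa [Matrix.det_transpose]
  have hmem : Mᵀ * E k 0 0 * M ∈ Submodule.span k
      {E k 1 1 - E k 2 2, E k 0 0 - E k 2 2,
        (2 : k) • E k 0 0 + (E k 0 1 + E k 1 0) + (E k 0 2 + E k 2 0)
          + (E k 1 2 + E k 2 1)} := by
    have : Mᵀ * E k 0 0 * M ∈ (fun A => Mᵀ * A * M) ''
        ((Submodule.span k {E k 0 0, E k 1 1, E k 2 2} : Submodule k _) : Set _) :=
      Set.mem_image_of_mem _ (Submodule.subset_span (Set.mem_insert _ _))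
    rw [hMW] at this
    exact this
  have hr : (Mᵀ * E k 0 0 * M).rank = 1 := by
    rw [Matrix.rank_mul_eq_left_of_isUnit_det M (Mᵀ * E k 0 0) hdet,
      Matrix.rank_mul_eq_right_of_isUnit_det Mᵀ (E k 0 0) hdetT, rankE00]
  have hne : Mᵀ * E k 0 0 * M ≠ 0 := by
    intro h
    rw [h, Matrix.rank_zero] at hr
    exact one_ne_zero hr.symm
  exact noRankOne _ hmem hne hr
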